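/- Let S be an inverse semigroup with zero, G a group, σ : S^× → G an idempotent pure morphism, and s, t ∈ S^× with σ(s) = σ(t). Suppose φ is a character on E(S) with φ(s* s) = 1 and φ(t* t) = 1. Then the element u := t s* s satisfies: u ≠ 0, u ≤ s, u ≤ t, and u* u = s* s · t* t; in particular φ(u* u) = 1. -/

import Mathlib

/-- An inverse semigroup structure on a semigroup with zero: `star s` is the unique
generalized inverse of `s`. -/
structure IsInvSemigroup (S : Type*) [SemigroupWithZero S] (star : S → S) : Prop where
  mul_star_mul : ∀ s : S, s * star s * s = s
  star_mul_star : ∀ s : S, star s * s * star s = star s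
  star_unique : ∀ s t : S, s * t * s = s → t * s * t = t → t = star s

/-- `e` belongs to the semilattice of idempotents `E(S) = {s s* : s ∈ S}`. -/
def IsIdemE {S : Type*} [SemigroupWithZero S] (star : S → S) (e : S) : Prop :=
  ∃ x : S, e = x * star x

/-- The natural partial order on an inverse semigroup: `s ≤ t` iff `s = e t` for some
idempotent `e`. -/
def natLe {S : Type*} [SemigroupWithZero S] (star : S → S) (s t : S) : Prop :=
  ∃ e : S, IsIdemE star e ∧ s = e * t

/-- `m` is a maximal element of `(S^×, ≤)`. -/
def IsMaxNonzero {S : Type*} [SemigroupWithZero S] (star : S → S) (m : S) : Prop :=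
  m ≠ 0 ∧ ∀ t : S, t ≠ 0 → natLe star m t → t = m

/-- `S` is `0`-`F`-inverse: every nonzero element lies beneath a unique maximal element
of `(S^×, ≤)`. -/
def ZeroFInverse {S : Type*} [SemigroupWithZero S] (star : S → S) : Prop :=
  ∀ s : S, s ≠ 0 → ∃! m : S, IsMaxNonzero star m ∧ natLe star s m

/-- A morphism (grading) `σ : S^× → G`: `σ(st) = σ(s)σ(t)` whenever `st ≠ 0`. -/
def IsGrading {S : Type*} [SemigroupWithZero S] {G : Type*} [Group G] (σ : S → G) : Prop :=
  ∀ s t : S, s ≠ 0 → t ≠ 0 → s * t ≠ 0 → σ (s * t) = σ s * σ t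

/-- A character on the semilattice of idempotents `E(S)`: a nonzero semilattice
homomorphism `E → {0,1}` (modelled by `Bool` under `&&`) sending `0` to `0`. -/
def IsCharE {S : Type*} [SemigroupWithZero S] (star : S → S) (φ : S → Bool) : Prop :=
  (∀ e f : S, IsIdemE star e → IsIdemE star f → φ (e * f) = (φ e && φ f)) ∧
  φ 0 = false ∧ ∃ e : S, IsIdemE star e ∧ φ e = true

/-!
Since `σ(t s*) = σ(t) σ(s)⁻¹ = 1` and `σ` is idempotent pure, `t s*` is an idempotent, so
`u = (t s*) s ≤ s`; and `u = t (s* s) ≤ t` holds in any inverse semigroup. Idempotents commute,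
which gives `u* u = (s* s)(s* s)(t* t) = (s* s)(t* t)`. Finally `φ((t* t)(s* s)) = 1` forces
`(t* t)(s* s) = t* u` to be nonzero, hence `u ≠ 0`.
-/

namespace IsInvSemigroup

variable {S : Type*} [SemigroupWithZero S] {star : S → S}

theorem star_star (h : IsInvSemigroup S star) (x : S) : star (star x) = x :=
  (h.star_unique (star x) x (h.star_mul_star x) (h.mul_star_mul x)).symm

theorem isIdempotentElem_mul_star (h : IsInvSemigroup S star) (x : S) :
    IsIdempotentElem (x * star x) := by
  rw [IsIdempotentElem, ← mul_assoc, h.mul_star_mul]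

theorem isIdempotentElem_star_mul (h : IsInvSemigroup S star) (x : S) :
    IsIdempotentElem (star x * x) := by
  simpa only [h.star_star] using h.isIdempotentElem_mul_star (star x)

theorem isIdemE_star_mul (h : IsInvSemigroup S star) (x : S) : IsIdemE star (star x * x) :=
  ⟨star x, by rw [h.star_star]⟩

theorem star_eq_self_of_isIdempotentElem (h : IsInvSemigroup S star) {e : S}
    (he : IsIdempotentElem e) : star e = e :=
  (h.star_unique e e (by rw [he.eq, he.eq]) (by rw [he.eq, he.eq])).symm

theorem isIdempotentElem_mul (h : IsInvSemigroup S star) {e f : S}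
    (he : IsIdempotentElem e) (hf : IsIdempotentElem f) : IsIdempotentElem (e * f) := by
  have he' (x : S) : e * (e * x) = e * x := by rw [← mul_assoc, he.eq]
  have hf' (x : S) : f * (f * x) = f * x := by rw [← mul_assoc, hf.eq]
  set a := star (e * f)
  have hm : e * (f * (a * (e * f))) = e * f := by
    simpa only [mul_assoc] using h.mul_star_mul (e * f)
  have ha (x : S) : a * (e * (f * (a * x))) = a * x := by
    rw [show a * (e * (f * (a * x))) = a * (e * f) * a * x by simp only [mul_assoc],
      h.star_mul_star]
  -- `f a e` is a generalized inverse of `e f`, so it is `a`; this makes `a` idempotent.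
  have hfae : f * a * e = a := h.star_unique (e * f) (f * a * e)
    (by simp only [mul_assoc, he', hf', hm])
    (by simp only [mul_assoc, he', hf', ha])
  have haa : IsIdempotentElem a := by
    rw [IsIdempotentElem, ← hfae]
    simp only [mul_assoc, ha]
  have hef : e * f = a := by
    rw [← h.star_star (e * f), h.star_eq_self_of_isIdempotentElem haa]
  rw [hef]
  exact haa

theorem commute_of_isIdempotentElem (h : IsInvSemigroup S star) {e f : S}
    (he : IsIdempotentElem e) (hf : IsIdempotentElem f) : Commute e f := by
  have he' (x : S) : e * (e * x) = e * x := by rw [← mul_assoc, he.eq]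
  have hf' (x : S) : f * (f * x) = f * x := by rw [← mul_assoc, hf.eq]
  have hef : e * (f * (e * f)) = e * f := by
    simpa only [mul_assoc] using (h.isIdempotentElem_mul he hf).eq
  have hfe : f * (e * (f * e)) = f * e := by
    simpa only [mul_assoc] using (h.isIdempotentElem_mul hf he).eq
  have := h.star_unique (e * f) (f * e)
    (by simp only [mul_assoc, he', hf', hef]) (by simp only [mul_assoc, he', hf', hfe])
  rw [h.star_eq_self_of_isIdempotentElem (h.isIdempotentElem_mul he hf)] at this
  exact this.symm

theorem star_mul (h : IsInvSemigroup S star) (x y : S) : star (x * y) = star y * star x := by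
  have comm : star x * x * (y * star y) = y * star y * (star x * x) :=
    (h.commute_of_isIdempotentElem (h.isIdempotentElem_star_mul x)
      (h.isIdempotentElem_mul_star y)).eq
  refine (h.star_unique (x * y) (star y * star x) ?_ ?_).symm
  · calc x * y * (star y * star x) * (x * y) = x * (y * star y * (star x * x)) * y := by
          simp only [mul_assoc]
      _ = (x * star x * x) * (y * star y * y) := by rw [← comm]; simp only [mul_assoc]
      _ = x * y := by rw [h.mul_star_mul, h.mul_star_mul]
  · calc star y * star x * (x * y) * (star y * star x)
          = star y * (star x * x * (y * star y)) * star x := by simp only [mul_assoc]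
      _ = (star y * y * star y) * (star x * x * star x) := by rw [comm]; simp only [mul_assoc]
      _ = star y * star x := by rw [h.star_mul_star, h.star_mul_star]

theorem mul_star_ne_zero (h : IsInvSemigroup S star) {x : S} (hx : x ≠ 0) : x * star x ≠ 0 :=
  fun hz => hx (by rw [← h.mul_star_mul x, hz, zero_mul])

theorem star_ne_zero (h : IsInvSemigroup S star) {x : S} (hx : x ≠ 0) : star x ≠ 0 :=
  right_ne_zero_of_mul (h.mul_star_ne_zero hx)

theorem natLe_mul_star_mul_self (h : IsInvSemigroup S star) (t x : S) :
    natLe star (t * (star x * x)) t := by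
  refine ⟨t * star x * star (t * star x), ⟨t * star x, rfl⟩, ?_⟩
  calc t * (star x * x) = t * star t * t * (star x * x) := by rw [h.mul_star_mul]
    _ = t * (star x * x * (star t * t)) := by
        rw [(h.commute_of_isIdempotentElem (h.isIdempotentElem_star_mul x)
          (h.isIdempotentElem_star_mul t)).eq]
        simp only [mul_assoc]
    _ = t * star x * star (t * star x) * t := by
        rw [h.star_mul, h.star_star]; simp only [mul_assoc]

theorem star_mul_self_of_isIdempotentElem (h : IsInvSemigroup S star) (t : S) {e : S}
    (he : IsIdempotentElem e) : star (t * e) * (t * e) = e * (star t * t) := by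
  calc star (t * e) * (t * e) = e * ((star t * t) * e) := by
        rw [h.star_mul, h.star_eq_self_of_isIdempotentElem he]; simp only [mul_assoc]
    _ = e * (star t * t) := by
        rw [← (h.commute_of_isIdempotentElem he (h.isIdempotentElem_star_mul t)).eq,
          ← mul_assoc, he.eq]

end IsInvSemigroup

namespace IsGrading

variable {S G : Type*} [SemigroupWithZero S] [Group G] {star : S → S} {σ : S → G}

theorem map_mul_star (hσ : IsGrading σ) (h : IsInvSemigroup S star) {s : S} (hs : s ≠ 0) :
    σ (s * star s) = 1 := by
  have hmul := hσ (s * star s) s (h.mul_star_ne_zero hs) hs (by rwa [h.mul_star_mul])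
  rw [h.mul_star_mul] at hmul
  exact mul_eq_right.mp hmul.symm

theorem map_star (hσ : IsGrading σ) (h : IsInvSemigroup S star) {s : S} (hs : s ≠ 0) :
    σ (star s) = (σ s)⁻¹ := by
  have hmul := hσ s (star s) hs (h.star_ne_zero hs) (h.mul_star_ne_zero hs)
  rw [hσ.map_mul_star h hs] at hmul
  exact (inv_eq_of_mul_eq_one_right hmul.symm).symm

end IsGrading

/-- for an idempotent pure morphism `σ`, nonzero `s, t` with `σ s = σ t`, and a
character `φ` with `φ(s* s) = 1 = φ(t* t)`, the element `u = t s* s` is nonzero, lies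
below both `s` and `t`, and satisfies `u* u = (s* s)(t* t)`, whence `φ(u* u) = 1`. -/
theorem stmt2 {S G : Type*} [SemigroupWithZero S] [Group G] (star : S → S)
    (hinv : IsInvSemigroup S star) (σ : S → G) (hσ : IsGrading σ)
    (hpure : ∀ s : S, s ≠ 0 → σ s = 1 → IsIdemE star s)
    (s t : S) (hs : s ≠ 0) (ht : t ≠ 0) (hst : σ s = σ t)
    (φ : S → Bool) (hφ : IsCharE star φ)
    (hφs : φ (star s * s) = true) (hφt : φ (star t * t) = true) :
    t * star s * s ≠ 0 ∧
    natLe star (t * star s * s) s ∧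
    natLe star (t * star s * s) t ∧
    star (t * star s * s) * (t * star s * s) = (star s * s) * (star t * t) ∧
    φ (star (t * star s * s) * (t * star s * s)) = true := by
  obtain ⟨hφmul, hφzero, -⟩ := hφ
  have hE_s := hinv.isIdemE_star_mul s
  have hE_t := hinv.isIdemE_star_mul t
  have hu : t * star s * s ≠ 0 := by
    intro hu
    have hφts := hφmul _ _ hE_t hE_s
    rw [hφt, hφs, show star t * t * (star s * s) = star t * (t * star s * s) by
      simp only [mul_assoc], hu, mul_zero, hφzero] at hφts
    exact Bool.false_ne_true hφts
  have hts : t * star s ≠ 0 := left_ne_zero_of_mul hu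
  have hE_ts : IsIdemE star (t * star s) := hpure _ hts (by
    rw [hσ t (star s) ht (hinv.star_ne_zero hs) hts, hσ.map_star hinv hs, hst, mul_inv_cancel])
  have huu : star (t * star s * s) * (t * star s * s) = star s * s * (star t * t) := by
    simpa only [mul_assoc] using
      hinv.star_mul_self_of_isIdempotentElem t (hinv.isIdempotentElem_star_mul s)
  refine ⟨hu, ⟨t * star s, hE_ts, rfl⟩, ?_, huu, ?_⟩
  · simpa only [mul_assoc] using hinv.natLe_mul_star_mul_self t s
  · rw [huu, hφmul _ _ hE_s hE_t, hφs, hφt, Bool.and_self]
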